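/- Let (Ω, S) be a minimal aperiodic subshift, V a linear map, and u, v ∈ Ω with V·W(u) bounded. Then V·W(v) is also bounded, the map φ_v (defined from base point v) is well-defined, and φ_u − φ_v is the constant function with value φ_u(v). -/

import Mathlib

/-- Abelianization of `u_{[0,n)}` for a bi-infinite word `u : ℤ → A`, with the
convention `ab(u_{[0,n)}) = -ab(u_{[-n,0)})` for `n < 0`. -/
def abPrefix {A : Type*} [DecidableEq A] (u : ℤ → A) (n : ℤ) : A → ℤ := fun a =>
  if 0 ≤ n then (((Finset.range n.toNat).filter (fun i : ℕ => u (i : ℤ) = a)).card : ℤ)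
  else -((((Finset.range (-n).toNat).filter (fun i : ℕ => u (-((i : ℤ) + 1)) = a)).card : ℤ))

/-!
The abelianized prefixes satisfy the cocycle identity
`ab(w_{[0,m+n)}) = ab(w_{[0,m)}) + ab((Sᵐw)_{[0,n)})`, so on the orbit of `u` the map `φu` satisfies
`φu (Sⁿw) - φu w = V · ab(w_{[0,n)})`. Both sides are continuous in `w` (the right side depends on
finitely many letters), so the identity extends to the orbit closure, which by minimality contains
`v`. Hence `φv := φu - φu v` interpolates `V · ab(v_{[0,n)})`, and these values are bounded because
they lie in `φu(Ω) - φu v`, the continuous image of a compact set.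
-/

section AbPrefix

variable {A : Type*} [DecidableEq A]

@[simp]
lemma abPrefix_zero (u : ℤ → A) (a : A) : abPrefix u 0 a = 0 := by
  simp [abPrefix]

lemma abPrefix_add_one (u : ℤ → A) (n : ℤ) (a : A) :
    abPrefix u (n + 1) a = abPrefix u n a + if u n = a then 1 else 0 := by
  unfold abPrefix
  rcases lt_trichotomy n (-1) with h | rfl | h
  · obtain ⟨k, rfl⟩ : ∃ k : ℕ, n = -((k + 1 : ℕ) : ℤ) - 1 := ⟨(-n - 2).toNat, by omega⟩
    rw [if_neg (by omega), if_neg (by omega),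
      show (-(-((k + 1 : ℕ) : ℤ) - 1)).toNat = k + 1 + 1 by omega,
      show (-(-((k + 1 : ℕ) : ℤ) - 1 + 1)).toNat = k + 1 by omega,
      Finset.range_add_one (n := k + 1), Finset.filter_insert, neg_add']
    split_ifs <;> simp_all
  · simp [Finset.range_one, Finset.filter_singleton]
    split_ifs <;> simp
  · lift n to ℕ using (by omega)
    rw [if_pos (by omega), if_pos (by omega), show ((n : ℤ) + 1).toNat = n + 1 by omega,
      Int.toNat_natCast, Finset.range_add_one, Finset.filter_insert]
    split_ifs <;> simp_all

lemma abPrefix_shift (u : ℤ → A) (m n : ℤ) (a : A) :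
    abPrefix (fun i => u (i + m)) n a = abPrefix u (m + n) a - abPrefix u m a := by
  induction n using Int.induction_on with
  | zero => simp
  | succ k ih =>
    rw [abPrefix_add_one, ← add_assoc, abPrefix_add_one, ih, add_comm (k : ℤ) m]
    ring
  | pred k ih =>
    have h₁ := abPrefix_add_one (fun i => u (i + m)) (-k - 1) a
    have h₂ := abPrefix_add_one u (m + (-k - 1)) a
    simp only [sub_add_cancel, show m + (-(k : ℤ) - 1) + 1 = m + -k by ring,
      show -(k : ℤ) - 1 + m = m + (-k - 1) by ring] at h₁ h₂
    omega

variable [TopologicalSpace A] [DiscreteTopology A]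

lemma continuous_abPrefix (n : ℤ) (a : A) : Continuous fun w : ℤ → A => abPrefix w n a := by
  have hstep : ∀ k : ℤ, Continuous fun w : ℤ → A => if w k = a then (1 : ℤ) else 0 :=
    fun k => (continuous_of_discreteTopology (f := fun x : A => if x = a then (1 : ℤ) else 0)).comp
      (continuous_apply k)
  induction n using Int.induction_on with
  | zero => simpa using continuous_const
  | succ k ih =>
    simp only [abPrefix_add_one]
    exact ih.add (hstep k)
  | pred k ih =>
    have hpred (w : ℤ → A) :
        abPrefix w (-k - 1) a = abPrefix w (-k) a - if w (-k - 1) = a then 1 else 0 := by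
      rw [eq_sub_iff_add_eq, ← abPrefix_add_one, sub_add_cancel]
    simp only [hpred]
    exact ih.sub (hstep _)

end AbPrefix

lemma shift_mem_of_image_shift_one_eq {X : Type*} {Ω : Set (ℤ → X)}
    (hinv : (fun x : ℤ → X => fun i => x (i + 1)) '' Ω = Ω) (n : ℤ) {w : ℤ → X} (hw : w ∈ Ω) :
    (fun i => w (i + n)) ∈ Ω := by
  induction n using Int.induction_on with
  | zero => simpa using hw
  | succ k ih =>
    rw [← hinv]
    exact ⟨_, ih, funext fun i => by simp only [add_assoc, add_comm (1 : ℤ)]⟩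
  | pred k ih =>
    rw [← hinv] at ih
    obtain ⟨x, hx, hxw⟩ := ih
    convert hx using 1
    funext i
    simpa [sub_add_cancel, sub_add_eq_add_sub, add_sub_assoc] using (congrFun hxw (i - 1)).symm

lemma sub_eq_abPrefix_of_mem_closure_orbit {A E : Type*} [Fintype A] [DecidableEq A]
    [TopologicalSpace A] [DiscreteTopology A] [NormedAddCommGroup E] [NormedSpace ℝ E]
    {Ω : Set (ℤ → A)} (hclosed : IsClosed Ω)
    (hinv : (fun x : ℤ → A => fun i => x (i + 1)) '' Ω = Ω)
    (V : (A → ℝ) →ₗ[ℝ] E) {u : ℤ → A} (hu : u ∈ Ω)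
    {φ : (ℤ → A) → E} (hφ : ContinuousOn φ Ω)
    (hφu : ∀ n : ℤ, φ (fun i => u (i + n)) = V fun a => (abPrefix u n a : ℝ)) (n : ℤ)
    {w : ℤ → A} (hw : w ∈ closure {z : ℤ → A | ∃ m : ℤ, z = fun i => u (i + m)}) :
    φ (fun i => w (i + n)) - φ w = V fun a => (abPrefix w n a : ℝ) := by
  set O := {z : ℤ → A | ∃ m : ℤ, z = fun i => u (i + m)}
  have hOΩ : closure O ⊆ Ω :=
    closure_minimal (by rintro _ ⟨m, rfl⟩; exact shift_mem_of_image_shift_one_eq hinv m hu) hclosed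
  have hshift : Continuous fun z : ℤ → A => fun i => z (i + n) :=
    continuous_pi fun i => continuous_apply (i + n)
  have hab : Continuous fun z : ℤ → A => V fun a => (abPrefix z n a : ℝ) :=
    V.continuous_of_finiteDimensional.comp <| continuous_pi fun a =>
      continuous_of_discreteTopology.comp (continuous_abPrefix n a)
  refine Set.EqOn.of_subset_closure (f := fun z => φ (fun i => z (i + n)) - φ z) (s := O) ?_ ?_
    hab.continuousOn subset_closure subset_rfl hw
  · rintro _ ⟨m, rfl⟩
    have hadd : (fun i => u (i + n + m)) = fun i => u (i + (m + n)) := by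
      simp only [add_assoc, add_comm n]
    simp only [hadd, hφu, ← map_sub, abPrefix_shift, Int.cast_sub]
    rfl
  · exact (hφ.comp hshift.continuousOn fun z hz =>
      shift_mem_of_image_shift_one_eq hinv n (hOΩ hz)).sub (hφ.mono hOΩ)

theorem stmt_17_general {A : Type*} [Fintype A] [DecidableEq A]
    [TopologicalSpace A] [DiscreteTopology A] {d : ℕ}
    (Ω : Set (ℤ → A)) (hclosed : IsClosed Ω)
    (hinv : (fun x : ℤ → A => fun i => x (i + 1)) '' Ω = Ω)
    (hmin : ∀ x ∈ Ω, ∀ y ∈ Ω, y ∈ closure {z : ℤ → A | ∃ n : ℤ, z = fun i => x (i + n)})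
    (V : (A → ℝ) →ₗ[ℝ] (Fin d → ℝ)) (u : ℤ → A) (hu : u ∈ Ω) (v : ℤ → A) (hv : v ∈ Ω)
    (φu : (ℤ → A) → (Fin d → ℝ)) (hcontu : ContinuousOn φu Ω)
    (hφu : ∀ n : ℤ, φu (fun i => u (i + n)) = V fun a => (abPrefix u n a : ℝ)) :
    Bornology.IsBounded (Set.range fun n : ℤ => V fun a => (abPrefix v n a : ℝ)) ∧
    ∃ φv : (ℤ → A) → (Fin d → ℝ), ContinuousOn φv Ω ∧
      (∀ n : ℤ, φv (fun i => v (i + n)) = V fun a => (abPrefix v n a : ℝ)) ∧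
      ∀ w ∈ Ω, φu w - φv w = φu v := by
  have hφv (n : ℤ) : φu (fun i => v (i + n)) - φu v = V fun a => (abPrefix v n a : ℝ) :=
    sub_eq_abPrefix_of_mem_closure_orbit hclosed hinv V hu hcontu hφu n (hmin u hu v hv)
  refine ⟨?_, fun w => φu w - φu v, hcontu.sub continuousOn_const, hφv,
    fun w _ => sub_sub_cancel _ _⟩
  have hK : IsCompact ((· - φu v) '' (φu '' Ω)) :=
    (hclosed.isCompact.image_of_continuousOn hcontu).image (continuous_sub_right _)
  refine hK.isBounded.subset ?_
  rintro _ ⟨n, rfl⟩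
  exact ⟨_, ⟨_, shift_mem_of_image_shift_one_eq hinv n hv, rfl⟩, hφv n⟩

theorem stmt_17 {A : Type*} [Fintype A] [DecidableEq A]
    [TopologicalSpace A] [DiscreteTopology A] {d : ℕ}
    (Ω : Set (ℤ → A)) (hclosed : IsClosed Ω)
    (hinv : (fun x : ℤ → A => fun i => x (i + 1)) '' Ω = Ω)
    (hmin : ∀ x ∈ Ω, ∀ y ∈ Ω, y ∈ closure {z : ℤ → A | ∃ n : ℤ, z = fun i => x (i + n)})
    (haper : ∀ x ∈ Ω, ∀ n : ℤ, (fun i => x (i + n)) = x → n = 0)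
    (V : (A → ℝ) →ₗ[ℝ] (Fin d → ℝ)) (u : ℤ → A) (hu : u ∈ Ω) (v : ℤ → A) (hv : v ∈ Ω)
    (hbdd : Bornology.IsBounded
      (Set.range fun n : ℤ => V fun a => (abPrefix u n a : ℝ)))
    (φu : (ℤ → A) → (Fin d → ℝ)) (hcontu : ContinuousOn φu Ω)
    (hφu : ∀ n : ℤ, φu (fun i => u (i + n)) = V fun a => (abPrefix u n a : ℝ)) :
    Bornology.IsBounded (Set.range fun n : ℤ => V fun a => (abPrefix v n a : ℝ)) ∧
    ∃ φv : (ℤ → A) → (Fin d → ℝ), ContinuousOn φv Ω ∧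
      (∀ n : ℤ, φv (fun i => v (i + n)) = V fun a => (abPrefix v n a : ℝ)) ∧
      ∀ w ∈ Ω, φu w - φv w = φu v :=
  stmt_17_general Ω hclosed hinv hmin V u hu v hv φu hcontu hφu
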